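/- arXiv:0802.2862 — 4 statements merged into one kernel-verified Lean document; each statement's English description precedes it below -/
import Mathlib

section
/- There is a single first-order formula φ(x) with one free variable, over the language with binary relation symbols ⊑ (prefix order of the iteration) and ≤̂ (lifted tree order), unary relation symbols root̂ (lifted root predicate) and clone, and a constant for the empty sequence, such that for EVERY tree (T, ≤, r) (viewed as a structure with the binary relation ≤ and the unary predicate {r}) and every node t ∈ T: the infinitary Muchnik iteration (T^∞, clone) satisfies φ at the one-element sequence [t] if and only if there is a strictly increasing function f : ℕ → T with f 0 = t (i.e., t lies on an infinite branch of T). (Core of the lemma that the set U of nodes on infinite branches is uniformly first-order definable in the infinitary Muchnik iteration.) -/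
/-
A node `t` lies on an infinite branch iff some infinite sequence `s` with `s 0 = t` increases
strictly at every step. In `T^∞` the infinite sequences are exactly the `⊑`-maximal elements, and
the finite sequences strictly between `[t]` and `s` are its prefixes of length `n + 2`, ending in
`[s n, s (n + 1)]`. "The last two entries `a, b` of `q` satisfy `a < b`" is first-order: `q` is not
a clone, but lies `≤̂`-above a clone (necessarily `u ++ [a, a]`, which forces `a ≤ b`).
-/

open FirstOrder

namespace Paper

/-- Extra relations for the (weak-)MSO companion: a sort predicate and a membership relation. -/
inductive MSORel : ℕ → Type
  | sort : MSORel 1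
  | mem : MSORel 2

/-- The companion language: the relations of `L` together with a unary sort predicate
and a binary membership relation. -/
def msoLang (L : Language) : Language where
  Functions := L.Functions
  Relations n := L.Relations n ⊕ MSORel n

/-- A language whose only function symbols are constants. -/
class ConstOnly (L : Language) : Prop where
  isEmpty : ∀ n, IsEmpty (L.Functions (n + 1))

instance (L : Language) [L.IsRelational] : ConstOnly L := ⟨fun _ => inferInstance⟩

/-- The weak-MSO companion structure of an `L`-structure `M`: the universe is `M ⊕ Finset M`. -/
def msoStructure (L : Language) (M : Type) [L.Structure M] [ConstOnly L] :
    (msoLang L).Structure (M ⊕ Finset M) where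
  funMap {n} f := match n, f with
    | 0, f => fun _ => Sum.inl (Language.Structure.funMap (L := L) (M := M) f fun i => i.elim0)
    | _ + 1, f => (ConstOnly.isEmpty (L := L) _).elim f
  RelMap {n} r := match n, r with
    | _, Sum.inl R => fun x => ∃ y, x = Sum.inl ∘ y ∧ Language.Structure.RelMap (L := L) R y
    | 1, Sum.inr MSORel.sort => fun x => ∃ a, x 0 = Sum.inl a
    | 2, Sum.inr MSORel.mem => fun x => ∃ a S, x 0 = Sum.inl a ∧ x 1 = Sum.inr S ∧ a ∈ S

instance msoStructureInst (L : Language) (M : Type) [L.Structure M] [ConstOnly L] :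
    (msoLang L).Structure (M ⊕ Finset M) := msoStructure L M

/-- The companion structure with second sort ranging over the sets satisfying `P`. -/
def setCompanion (L : Language) (M : Type) [L.Structure M] [ConstOnly L] (P : Set M → Prop) :
    (msoLang L).Structure (M ⊕ {S : Set M // P S}) where
  funMap {n} f := match n, f with
    | 0, f => fun _ => Sum.inl (Language.Structure.funMap (L := L) (M := M) f fun i => i.elim0)
    | _ + 1, f => (ConstOnly.isEmpty (L := L) _).elim f
  RelMap {n} r := match n, r with
    | _, Sum.inl R => fun x => ∃ y, x = Sum.inl ∘ y ∧ Language.Structure.RelMap (L := L) R y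
    | 1, Sum.inr MSORel.sort => fun x => ∃ a, x 0 = Sum.inl a
    | 2, Sum.inr MSORel.mem => fun x => ∃ a S, x 0 = Sum.inl a ∧ x 1 = Sum.inr S ∧ a ∈ S.val

instance setCompanionInst (L : Language) (M : Type) [L.Structure M] [ConstOnly L]
    (P : Set M → Prop) : (msoLang L).Structure (M ⊕ {S : Set M // P S}) :=
  setCompanion L M P

/-- Extra symbols for the Shelah-Stupp iteration: the prefix order. -/
inductive IterRel : ℕ → Type
  | pre : IterRel 2

/-- The language of the Shelah-Stupp iteration: lifted relations of `L`,
a binary prefix order, and a constant (for the empty word). -/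
def iterLang (L : Language) : Language where
  Functions n := match n with
    | 0 => Unit
    | _ + 1 => Empty
  Relations n := L.Relations n ⊕ IterRel n

instance (L : Language) : ConstOnly (iterLang L) := ⟨fun _ => inferInstanceAs (IsEmpty Empty)⟩

/-- The Shelah-Stupp iteration `𝔄*` of an `L`-structure `A`: the universe is `List A`,
with the prefix order, the lifted relations and the empty word as constant. -/
instance iterStructure (L : Language) (A : Type) [L.Structure A] :
    (iterLang L).Structure (List A) where
  funMap {n} f := match n, f with
    | 0, _ => fun _ => ([] : List A)
    | _ + 1, f => f.elim
  RelMap {n} r := match n, r with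
    | _, Sum.inl R => fun x =>
        ∃ (u : List A) (y : Fin _ → A), (∀ i, x i = u ++ [y i]) ∧ Language.Structure.RelMap (L := L) R y
    | 2, Sum.inr IterRel.pre => fun x => x 0 <+: x 1

end Paper
namespace Paper

/-- The language of trees: a binary order relation and a unary root predicate. -/
inductive TreeRel : ℕ → Type
  | le : TreeRel 2
  | root : TreeRel 1

/-- The language of trees. -/
def treeLang : Language where
  Functions _ := Empty
  Relations := TreeRel

instance : treeLang.IsRelational := fun _ => inferInstanceAs (IsEmpty Empty)

/-- A set of words, viewed as a tree-structure with the prefix relation and the root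
predicate holding exactly at the empty word. -/
instance prefixTreeStructure {α : Type} (T : Set (List α)) : treeLang.Structure ↥T where
  funMap f := f.elim
  RelMap {n} r := match n, r with
    | 2, TreeRel.le => fun x => (x 0).val <+: (x 1).val
    | 1, TreeRel.root => fun x => (x 0).val = []

/-- Extra relations for the Muchnik iteration: the prefix order of the iteration
and the clone predicate. -/
inductive MuchRel : ℕ → Type
  | pre : MuchRel 2
  | clone : MuchRel 1

/-- The language of the Muchnik iteration: the lifted relations of `L`, the prefix order,
the clone predicate, and a constant (for the empty sequence). -/
def muchLang (L : Language) : Language where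
  Functions n := match n with
    | 0 => Unit
    | _ + 1 => Empty
  Relations n := L.Relations n ⊕ MuchRel n

instance (L : Language) : ConstOnly (muchLang L) := ⟨fun _ => inferInstanceAs (IsEmpty Empty)⟩

/-- The prefix relation on finite and infinite sequences. -/
def InfPrefix {A : Type} : (List A ⊕ (ℕ → A)) → (List A ⊕ (ℕ → A)) → Prop
  | Sum.inl u, Sum.inl v => u <+: v
  | Sum.inl u, Sum.inr s => ∀ i : Fin u.length, u.get i = s i
  | Sum.inr _, Sum.inl _ => False
  | Sum.inr s, Sum.inr s' => s = s'

/-- The infinitary Muchnik iteration `(𝔄^∞, clone)` of an `L`-structure `A`: the universe is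
`List A ⊕ (ℕ → A)` (finite and infinite sequences over `A`), with the prefix relation, the
lifted relations, the empty sequence as constant, and the clone predicate. -/
instance muchInfStructure (L : Language) (A : Type) [L.Structure A] :
    (muchLang L).Structure (List A ⊕ (ℕ → A)) where
  funMap {n} f := match n, f with
    | 0, _ => fun _ => (Sum.inl [] : List A ⊕ (ℕ → A))
    | _ + 1, f => f.elim
  RelMap {n} r := match n, r with
    | _, Sum.inl R => fun x => ∃ (u : List A) (y : Fin _ → A),
        (∀ i, x i = Sum.inl (u ++ [y i])) ∧ Language.Structure.RelMap (L := L) R y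
    | 2, Sum.inr MuchRel.pre => fun x => InfPrefix (x 0) (x 1)
    | 1, Sum.inr MuchRel.clone => fun x => ∃ (u : List A) (c : A), x 0 = Sum.inl (u ++ [c, c])

/-- The tree `T_ω`: all words over `ℕ × ℕ` whose sequence of second components is strictly
decreasing. -/
def Tomega : Set (List (ℕ × ℕ)) := {w | List.Chain' (· > ·) (w.map Prod.snd)}

end Paper

namespace Paper

/-- A tree is a partial order with a least element (the root) in which every
principal downset is finite and linearly ordered. -/
structure IsTree (V : Type) [PartialOrder V] [OrderBot V] : Prop where
  finite_below : ∀ v : V, {u : V | u ≤ v}.Finite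
  linear_below : ∀ v u w : V, u ≤ v → w ≤ v → u ≤ w ∨ w ≤ u

/-- A partial order with a least element, viewed as a structure for the tree language. -/
instance orderTreeStructure (V : Type) [PartialOrder V] [OrderBot V] :
    treeLang.Structure V where
  funMap f := f.elim
  RelMap {n} r := match n, r with
    | 2, TreeRel.le => fun x => x 0 ≤ x 1
    | 1, TreeRel.root => fun x => x 0 = ⊥

open Language

theorem _root_.List.append_pair_inj {A : Type} {u u' : List A} {a b c d : A} :
    u ++ [a, b] = u' ++ [c, d] ↔ u = u' ∧ a = c ∧ b = d := by
  simp only [← List.singleton_append (l := [b]), ← List.singleton_append (l := [d]),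
    ← List.append_assoc, List.append_singleton_inj, and_assoc]

theorem _root_.List.map_range_add_two {A : Type} (s : ℕ → A) (n : ℕ) :
    (List.range (n + 2)).map s = (List.range n).map s ++ [s n, s (n + 1)] := by
  simp [List.range_succ]

section MuchnikIteration

variable {A : Type}

theorem infPrefix_inr_left {s : ℕ → A} {z : List A ⊕ (ℕ → A)} :
    InfPrefix (Sum.inr s) z ↔ z = Sum.inr s := by
  cases z <;> simp [InfPrefix, eq_comm]

theorem infPrefix_inl_inr {v : List A} {s : ℕ → A} :
    InfPrefix (Sum.inl v) (Sum.inr s) ↔ v = (List.range v.length).map s := by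
  simp only [InfPrefix, List.ext_getElem_iff, List.length_map, List.length_range, true_and,
    List.getElem_map, List.getElem_range, List.get_eq_getElem]
  exact ⟨fun h i hi _ => h ⟨i, hi⟩, fun h i => h i i.2 (by simp)⟩

theorem infPrefix_singleton_inr {a : A} {s : ℕ → A} :
    InfPrefix (Sum.inl [a]) (Sum.inr s) ↔ s 0 = a := by
  simp [infPrefix_inl_inr, eq_comm]

theorem infPrefix_inr_iff {q : List A ⊕ (ℕ → A)} {s : ℕ → A} :
    InfPrefix q (Sum.inr s) ↔ q = Sum.inr s ∨ ∃ n, q = Sum.inl ((List.range n).map s) := by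
  rcases q with v | s'
  · simp only [infPrefix_inl_inr, reduceCtorEq, Sum.inl.injEq, false_or]
    exact ⟨fun h => ⟨_, h⟩, fun ⟨n, h⟩ => by simp [h]⟩
  · simp [InfPrefix, eq_comm]

theorem infPrefix_maximal_iff [Nonempty A] {y : List A ⊕ (ℕ → A)} :
    (∀ z, InfPrefix y z → z = y) ↔ ∃ s, y = Sum.inr s := by
  refine ⟨fun hmax => ?_, fun ⟨s, hs⟩ z => hs ▸ infPrefix_inr_left.1⟩
  rcases y with v | s
  · obtain ⟨a⟩ := ‹Nonempty A›
    simpa [InfPrefix] using hmax (Sum.inl (v ++ [a])) (List.prefix_append v [a])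
  · exact ⟨s, rfl⟩

theorem infPrefix_strictly_between_iff {s : ℕ → A} {q : List A ⊕ (ℕ → A)} :
    (InfPrefix (Sum.inl [s 0]) q ∧ q ≠ Sum.inl [s 0] ∧ InfPrefix q (Sum.inr s) ∧ q ≠ Sum.inr s) ↔
      ∃ n, q = Sum.inl ((List.range (n + 2)).map s) := by
  constructor
  · rintro ⟨hsq, hne, hqs, hne'⟩
    obtain ⟨m, rfl⟩ := (infPrefix_inr_iff.1 hqs).resolve_left hne'
    have : 1 ≤ m := by simpa using (show [s 0] <+: _ from hsq).length_le
    obtain _ | _ | n := m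
    · omega
    · simp at hne
    · exact ⟨n, rfl⟩
  · rintro ⟨n, rfl⟩
    refine ⟨?_, ?_, infPrefix_inr_iff.2 (.inr ⟨_, rfl⟩), Sum.inl_ne_inr⟩
    · show [s 0] <+: _
      simp [List.range_succ_eq_map]
    · exact fun h => by simpa using congrArg (Sum.elim List.length 0) h

end MuchnikIteration

section Formulas

variable {L : Language} {A : Type} [L.Structure A] {α : Type} {n : ℕ}

def preAtom (t₁ t₂ : (muchLang L).Term (α ⊕ Fin n)) : (muchLang L).BoundedFormula α n :=
  Relations.boundedFormula₂ (Sum.inr MuchRel.pre) t₁ t₂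

def cloneAtom (t : (muchLang L).Term (α ⊕ Fin n)) : (muchLang L).BoundedFormula α n :=
  Relations.boundedFormula₁ (Sum.inr MuchRel.clone) t

def liftAtom (R : L.Relations 2) (t₁ t₂ : (muchLang L).Term (α ⊕ Fin n)) :
    (muchLang L).BoundedFormula α n :=
  Relations.boundedFormula₂ (Sum.inl R) t₁ t₂

variable {v : α → List A ⊕ (ℕ → A)} {xs : Fin n → List A ⊕ (ℕ → A)}

@[simp]
theorem realize_preAtom (t₁ t₂ : (muchLang L).Term (α ⊕ Fin n)) :
    (preAtom t₁ t₂).Realize v xs ↔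
      InfPrefix (t₁.realize (Sum.elim v xs)) (t₂.realize (Sum.elim v xs)) :=
  Iff.rfl

@[simp]
theorem realize_cloneAtom (t : (muchLang L).Term (α ⊕ Fin n)) :
    (cloneAtom t).Realize v xs ↔ ∃ u c, t.realize (Sum.elim v xs) = Sum.inl (u ++ [c, c]) :=
  Iff.rfl

@[simp]
theorem realize_liftAtom (R : L.Relations 2) (t₁ t₂ : (muchLang L).Term (α ⊕ Fin n)) :
    (liftAtom R t₁ t₂).Realize v xs ↔ ∃ u a b,
      t₁.realize (Sum.elim v xs) = Sum.inl (u ++ [a]) ∧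
      t₂.realize (Sum.elim v xs) = Sum.inl (u ++ [b]) ∧ Structure.RelMap R ![a, b] := by
  refine ⟨fun ⟨u, y, hy, hR⟩ => ⟨u, y 0, y 1, hy 0, hy 1, ?_⟩,
    fun ⟨u, a, b, ha, hb, hR⟩ => ⟨u, ![a, b], fun i => ?_, hR⟩⟩
  · convert hR using 2; ext i; fin_cases i <;> rfl
  · fin_cases i
    exacts [ha, hb]

end Formulas

section EndsAscending

variable {T : Type} [PartialOrder T]

def EndsAscending (q : List T ⊕ (ℕ → T)) : Prop :=
  ∃ u a b, q = Sum.inl (u ++ [a, b]) ∧ a < b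

theorem endsAscending_append_pair {u : List T} {a b : T} :
    EndsAscending (Sum.inl (u ++ [a, b])) ↔ a < b := by
  simp only [EndsAscending, Sum.inl.injEq, List.append_pair_inj]
  exact ⟨fun ⟨_, _, _, ⟨_, ha, hb⟩, h⟩ => ha ▸ hb ▸ h, fun h => ⟨u, a, b, ⟨rfl, rfl, rfl⟩, h⟩⟩

theorem not_clone_and_exists_clone_le_iff {q : List T ⊕ (ℕ → T)} :
    ((¬ ∃ u c, q = Sum.inl (u ++ [c, c])) ∧
      ∃ w : List T ⊕ (ℕ → T), (∃ u c, w = Sum.inl (u ++ [c, c])) ∧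
        ∃ u a b, w = Sum.inl (u ++ [a]) ∧ q = Sum.inl (u ++ [b]) ∧ a ≤ b) ↔
      EndsAscending q := by
  constructor
  · rintro ⟨hq, w, ⟨u, c, rfl⟩, u', a, b, hw, rfl, hab⟩
    have hw' : (u ++ [c]) ++ [c] = u' ++ [a] := by simpa using Sum.inl.inj hw
    obtain ⟨rfl, rfl⟩ := List.append_singleton_inj.1 hw'
    exact ⟨u, c, b, by simp, lt_of_le_of_ne hab fun hcb => hq ⟨u, c, by simp [hcb]⟩⟩
  · rintro ⟨u, a, b, rfl, hab⟩
    refine ⟨fun ⟨u', c, h⟩ => ?_, Sum.inl (u ++ [a, a]), ⟨u, a, rfl⟩, u ++ [a], a, b,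
      by simp, by simp, hab.le⟩
    obtain ⟨-, rfl, rfl⟩ := List.append_pair_inj.1 (Sum.inl.inj h)
    exact hab.ne rfl

end EndsAscending

section InfiniteBranch

variable {T : Type} [PartialOrder T] [OrderBot T]

-- `simp` cannot instantiate `realize_liftAtom` at `TreeRel.le`, whose type `TreeRel 2` is
-- `treeLang.Relations 2` only after unfolding `treeLang`.
theorem realize_liftAtom_le {α : Type} {n : ℕ} {v : α → List T ⊕ (ℕ → T)}
    {xs : Fin n → List T ⊕ (ℕ → T)} (t₁ t₂ : (muchLang treeLang).Term (α ⊕ Fin n)) :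
    (liftAtom TreeRel.le t₁ t₂).Realize v xs ↔ ∃ u a b,
      t₁.realize (Sum.elim v xs) = Sum.inl (u ++ [a]) ∧
      t₂.realize (Sum.elim v xs) = Sum.inl (u ++ [b]) ∧ a ≤ b :=
  realize_liftAtom TreeRel.le t₁ t₂

open BoundedFormula in
def infiniteBranchFormula : (muchLang treeLang).Formula (Fin 1) :=
  let x {n} : (muchLang treeLang).Term (Fin 1 ⊕ Fin n) := Term.var (Sum.inl 0)
  ∃' ((∀' (preAtom &0 &1 ⟹ &1 =' &0)) ⊓ preAtom x &0 ⊓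
    ∀' (preAtom x &1 ⊓ ∼(&1 =' x) ⊓ preAtom &1 &0 ⊓ ∼(&1 =' &0) ⟹
      ∼(cloneAtom &1) ⊓ ∃' (cloneAtom &2 ⊓ liftAtom TreeRel.le &2 &1)))

open BoundedFormula in
theorem realize_infiniteBranchFormula (v : Fin 1 → List T ⊕ (ℕ → T)) :
    infiniteBranchFormula.Realize v ↔ ∃ y, (∀ z, InfPrefix y z → z = y) ∧ InfPrefix (v 0) y ∧
      ∀ q, InfPrefix (v 0) q → q ≠ v 0 → InfPrefix q y → q ≠ y → EndsAscending q := by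
  simp only [infiniteBranchFormula, Formula.Realize, realize_ex, realize_all, realize_inf,
    realize_imp, realize_not, realize_bdEqual, realize_preAtom, realize_cloneAtom,
    realize_liftAtom_le, Term.realize_var, Sum.elim_inl, Sum.elim_inr, Function.comp_apply,
    ← not_clone_and_exists_clone_le_iff, and_assoc, and_imp, ne_eq]
  -- what is left differs only by `Fin.snoc` lookups, which reduce definitionally
  exact Iff.rfl

end InfiniteBranch

section Branches

variable {T : Type} [PartialOrder T]

theorem forall_endsAscending_between_iff_strictMono (s : ℕ → T) :
    (∀ q, InfPrefix (Sum.inl [s 0]) q → q ≠ Sum.inl [s 0] → InfPrefix q (Sum.inr s) →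
      q ≠ Sum.inr s → EndsAscending q) ↔ StrictMono s :=
  calc (∀ q, _ → _ → _ → _ → EndsAscending q)
      ↔ ∀ q, (∃ n, q = Sum.inl ((List.range (n + 2)).map s)) → EndsAscending q := by
        simp only [← infPrefix_strictly_between_iff, and_imp]
    _ ↔ ∀ n, s n < s (n + 1) := by
        simp only [forall_exists_index, forall_eq_apply_imp_iff, List.map_range_add_two,
          endsAscending_append_pair]
    _ ↔ StrictMono s := ⟨strictMono_nat_of_lt_succ, fun h n => h n.lt_add_one⟩

variable [OrderBot T]

theorem exists_maximal_endsAscending_iff (t : T) :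
    (∃ y, (∀ z, InfPrefix y z → z = y) ∧ InfPrefix (Sum.inl [t]) y ∧
      ∀ q, InfPrefix (Sum.inl [t]) q → q ≠ Sum.inl [t] → InfPrefix q y → q ≠ y → EndsAscending q) ↔
      ∃ f : ℕ → T, StrictMono f ∧ f 0 = t := by
  constructor
  · rintro ⟨y, hmax, hty, hasc⟩
    obtain ⟨s, rfl⟩ := infPrefix_maximal_iff.1 hmax
    obtain rfl := infPrefix_singleton_inr.1 hty
    exact ⟨s, (forall_endsAscending_between_iff_strictMono s).1 hasc, rfl⟩
  · rintro ⟨s, hs, rfl⟩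
    exact ⟨Sum.inr s, infPrefix_maximal_iff.2 ⟨s, rfl⟩, infPrefix_singleton_inr.2 rfl,
      (forall_endsAscending_between_iff_strictMono s).2 hs⟩

end Branches

/-- there is a single first-order formula `φ(x)` over the language of the
infinitary Muchnik iteration of trees such that for every tree `T` and every node `t : T`,
`φ` holds at the one-element sequence `[t]` in `(T^∞, clone)` iff `t` lies on an infinite
branch of `T`. -/
theorem infinite_branch_uniformly_definable :
    ∃ φ : (muchLang treeLang).Formula (Fin 1),
      ∀ (T : Type) [PartialOrder T] [OrderBot T], IsTree T →
        ∀ t : T,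
          (φ.Realize (fun _ => (Sum.inl [t] : List T ⊕ (ℕ → T))) ↔
            ∃ f : ℕ → T, StrictMono f ∧ f 0 = t) :=
  ⟨infiniteBranchFormula, fun _ _ _ _ t =>
    (realize_infiniteBranchFormula _).trans (exists_maximal_endsAscending_iff t)⟩

end Paper
end

section
/- Let α be a finite alphabet and let M be a DFA over α with finite state type Q. Then the language M.accepts ⊆ List α is a multichain (with respect to the prefix order) if and only if every branching point of ↓M.accepts has length strictly less than Fintype.card Q. (Automata-theoretic characterization underlying the first-order definability of 'L(M) is a multichain' from the transition matrix.) -/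
namespace Paper

/-- A set of words is a chain if any two of its elements are comparable
under the prefix relation. -/
def IsPrefixChain {α : Type} (S : Set (List α)) : Prop :=
  ∀ u ∈ S, ∀ v ∈ S, u <+: v ∨ v <+: u

/-- A set of words is a multichain if it is a finite union of chains. -/
def IsMultichain {α : Type} (S : Set (List α)) : Prop :=
  ∃ (n : ℕ) (C : Fin n → Set (List α)), (∀ i, IsPrefixChain (C i)) ∧ S = ⋃ i, C i

/-- The downward (prefix) closure `↓L` of a set `L` of words. -/
def downcl {α : Type} (L : Set (List α)) : Set (List α) := {u | ∃ v ∈ L, u <+: v}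

/-- `x ∈ M` is a branching point of `M` if the set of elements of `M` strictly above `x`
is nonempty and has no least element with respect to the prefix order. -/
def IsBranchingPoint {α : Type} (M : Set (List α)) (x : List α) : Prop :=
  x ∈ M ∧ {y ∈ M | x <+: y ∧ x ≠ y}.Nonempty ∧
    ¬ ∃ z ∈ {y ∈ M | x <+: y ∧ x ≠ y}, ∀ y ∈ {y ∈ M | x <+: y ∧ x ≠ y}, z <+: y

end Paper

/-!
If `x` is a branching point of `↓L(M)` with `|Q| ≤ |x|`, the run on `x` repeats a state, so
`x = P v R` with `v ≠ []` and every `P v^k R` reaching the same state as `x`. Extending `x` by two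
different letters `a`, `b` to accepted words `x a s`, `x b t`, all `P v^k R a s` and `P v^k R b t`
are accepted; in a multichain two words of each family share a chain, which makes `R a s` and
`R b t` prefixes of powers of `v`, hence `a = b`.

Conversely, if all branching points are shorter than `N = |Q|`, two words of `L(M)` with the same
prefix of length `N` are comparable, so `L(M)` is the union of the finitely many chains indexed
by these prefixes.
-/

namespace Paper

section Words

variable {α : Type}

def IsPrefixClosed (D : Set (List α)) : Prop :=
  ∀ ⦃u v : List α⦄, u <+: v → v ∈ D → u ∈ D

lemma isPrefixClosed_downcl (L : Set (List α)) : IsPrefixClosed (downcl L) :=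
  fun _ _ huv ⟨w, hw, hvw⟩ => ⟨w, hw, huv.trans hvw⟩

lemma mem_downcl_of_mem {L : Set (List α)} {u : List α} (hu : u ∈ L) : u ∈ downcl L :=
  ⟨u, hu, List.prefix_rfl⟩

def wordPow (v : List α) (k : ℕ) : List α := (List.replicate k v).flatten

lemma wordPow_add (v : List α) (k l : ℕ) : wordPow v (k + l) = wordPow v k ++ wordPow v l := by
  rw [wordPow, List.replicate_add, List.flatten_append]; rfl

lemma length_wordPow (v : List α) (k : ℕ) : (wordPow v k).length = k * v.length := by
  simp [wordPow]

lemma isPrefixChain_prefixes_wordPow (v : List α) :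
    IsPrefixChain {w | ∃ K, w <+: wordPow v K} := by
  rintro u ⟨K, hu⟩ w ⟨K', hw⟩
  refine List.prefix_or_prefix_of_prefix (l₃ := wordPow v (K + K')) (hu.trans ?_) (hw.trans ?_)
  · exact wordPow_add v K K' ▸ List.prefix_append _ _
  · exact Nat.add_comm K' K ▸ wordPow_add v K' K ▸ List.prefix_append _ _

lemma exists_prefix_wordPow_of_prefix_append {v w : List α} {m : ℕ} (hv : v ≠ [])
    (hm : m ≠ 0) (h : w <+: wordPow v m ++ w) : ∃ K, w <+: wordPow v K := by
  have hiter : ∀ n, w <+: wordPow v (n * m) ++ w := by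
    intro n
    induction n with
    | zero => simp [wordPow]
    | succ n ih =>
      rw [Nat.succ_mul, wordPow_add, List.append_assoc]
      exact ih.trans ((List.prefix_append_right_inj _).2 h)
  refine ⟨w.length * m, List.prefix_of_prefix_length_le (hiter _) (List.prefix_append _ _) ?_⟩
  rw [length_wordPow, Nat.mul_assoc]
  exact Nat.le_mul_of_pos_right _ (Nat.mul_pos (Nat.pos_of_ne_zero hm) (List.length_pos_iff.2 hv))

lemma prefix_and_ne_iff {x y : List α} : (x <+: y ∧ x ≠ y) ↔ ∃ c s, y = x ++ c :: s := by
  constructor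
  · rintro ⟨⟨_ | ⟨c, s⟩, rfl⟩, hne⟩
    · simp at hne
    · exact ⟨c, s, rfl⟩
  · rintro ⟨c, s, rfl⟩
    simp

lemma isBranchingPoint_iff {D : Set (List α)} (hD : IsPrefixClosed D) {x : List α} :
    IsBranchingPoint D x ↔
      x ∈ D ∧ ∃ a b, a ≠ b ∧ x ++ [a] ∈ D ∧ x ++ [b] ∈ D := by
  simp only [IsBranchingPoint, prefix_and_ne_iff]
  constructor
  · rintro ⟨hx, ⟨_, hy, a, s, rfl⟩, hnotLeast⟩
    have ha : x ++ [a] ∈ D := hD ⟨s, by simp⟩ hy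
    push Not at hnotLeast
    obtain ⟨_, ⟨hy', b, t, rfl⟩, hab⟩ := hnotLeast (x ++ [a]) ⟨ha, a, [], rfl⟩
    refine ⟨hx, a, b, fun h => hab (by simp [h]), ha, hD ⟨t, by simp⟩ hy'⟩
  · rintro ⟨hx, a, b, hab, ha, hb⟩
    refine ⟨hx, ⟨_, ha, a, [], rfl⟩, ?_⟩
    rintro ⟨_, ⟨-, c, s, rfl⟩, hleast⟩
    have hca := hleast _ ⟨ha, a, [], rfl⟩
    have hcb := hleast _ ⟨hb, b, [], rfl⟩
    simp only [List.prefix_append_right_inj, List.cons_prefix_cons] at hca hcb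
    exact hab (hca.1.symm.trans hcb.1)

/-- A first disagreement of `u` and `v` after position `N` would be a branching point of `D`. -/
lemma prefix_or_prefix_of_take_eq {D : Set (List α)} (hD : IsPrefixClosed D)
    {N : ℕ} (hbr : ∀ x, IsBranchingPoint D x → x.length < N) {u v : List α}
    (hu : u ∈ D) (hv : v ∈ D) (huv : u.take N = v.take N) : u <+: v ∨ v <+: u := by
  have htake : ∀ n, n ≤ u.length → n ≤ v.length → u.take n = v.take n := by
    intro n
    induction n with
    | zero => simp
    | succ n ih =>
      intro hnu hnv
      by_cases hnN : n < N
      · have hshort : ∀ l : List α, l.take (n + 1) = (l.take N).take (n + 1) := fun l => by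
          rw [List.take_take, Nat.min_eq_left hnN]
        rw [hshort u, hshort v, huv]
      have hu' : u.take (n + 1) = u.take n ++ [u[n]] := by
        rw [List.take_add_one, List.getElem?_eq_getElem]; rfl
      have hv' : v.take (n + 1) = v.take n ++ [v[n]] := by
        rw [List.take_add_one, List.getElem?_eq_getElem]; rfl
      have hcommon := ih (by omega) (by omega)
      have hnext : u[n] = v[n] := by
        by_contra hne
        have hbranch : IsBranchingPoint D (u.take n) :=
          (isBranchingPoint_iff hD).2 ⟨hD (List.take_prefix _ _) hu, u[n], v[n], hne,
            hu' ▸ hD (List.take_prefix _ _) hu,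
            hcommon ▸ hv' ▸ hD (List.take_prefix _ _) hv⟩
        have := hbr _ hbranch
        simp only [List.length_take] at this
        omega
      rw [hu', hv', hcommon, hnext]
  rcases le_total u.length v.length with h | h
  · exact Or.inl (List.prefix_iff_eq_take.2 (by rw [← htake _ le_rfl h, List.take_length]))
  · exact Or.inr (List.prefix_iff_eq_take.2 (by rw [htake _ h le_rfl, List.take_length]))

lemma isMultichain_of_fibers {ι : Type} [Finite ι] {S : Set (List α)} (f : List α → ι)
    (hf : ∀ u ∈ S, ∀ v ∈ S, f u = f v → u <+: v ∨ v <+: u) : IsMultichain S := by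
  have := Fintype.ofFinite ι
  let e := Fintype.equivFin ι
  refine ⟨Fintype.card ι, fun i => {u ∈ S | f u = e.symm i}, ?_, ?_⟩
  · rintro i u ⟨hu, hfu⟩ v ⟨hv, hfv⟩
    exact hf u hu v hv (hfu.trans hfv.symm)
  · ext u
    simp only [Set.mem_iUnion, Set.mem_ofPred_eq]
    exact ⟨fun hu => ⟨e (f u), hu, by simp⟩, fun ⟨_, hu, _⟩ => hu⟩

lemma IsMultichain.exists_lt_comparable {S : Set (List α)} (hS : IsMultichain S)
    {f : ℕ → List α} (hf : ∀ k, f k ∈ S) :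
    ∃ k l, k < l ∧ (f k <+: f l ∨ f l <+: f k) := by
  obtain ⟨n, C, hC, rfl⟩ := hS
  choose i hi using fun k => Set.mem_iUnion.1 (hf k)
  obtain ⟨k, l, hkl, hikl⟩ := Finite.exists_ne_map_eq_of_infinite i
  have hcomp := hC (i k) _ (hi k) _ (hikl ▸ hi l)
  rcases hkl.lt_or_gt with h | h
  · exact ⟨k, l, h, hcomp⟩
  · exact ⟨l, k, h, hcomp.symm⟩

/-- Two of the words `u v^k w` lie in a common chain, which forces `w <+: v^m w` for some
`m ≠ 0`. -/
lemma IsMultichain.exists_prefix_wordPow {S : Set (List α)} (hS : IsMultichain S)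
    {u v w : List α} (hv : v ≠ []) (hmem : ∀ k, u ++ wordPow v k ++ w ∈ S) :
    ∃ K, w <+: wordPow v K := by
  obtain ⟨k, l, hkl, hcomp⟩ := hS.exists_lt_comparable hmem
  obtain ⟨m, rfl⟩ := Nat.exists_eq_add_of_lt hkl
  have hlen : (u ++ wordPow v k ++ w).length ≤ (u ++ wordPow v (k + m + 1) ++ w).length := by
    simp only [List.length_append, length_wordPow]
    gcongr
  have hpre : u ++ wordPow v k ++ w <+: u ++ wordPow v (k + m + 1) ++ w :=
    hcomp.elim id fun h => (h.eq_of_length (le_antisymm h.length_le hlen)) ▸ List.prefix_rfl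
  rw [Nat.add_assoc, wordPow_add] at hpre
  simp only [List.append_assoc, List.prefix_append_right_inj] at hpre
  exact exists_prefix_wordPow_of_prefix_append hv (Nat.succ_ne_zero m) hpre

end Words

lemma _root_.DFA.exists_eval_pump {α Q : Type} [Fintype Q] (M : DFA α Q) {x : List α}
    (hx : Fintype.card Q ≤ x.length) :
    ∃ P v R, v ≠ [] ∧ ∀ k, M.eval (P ++ wordPow v k ++ R) = M.eval x := by
  obtain ⟨q, P, v, R, -, -, hv, hP, hloop, hR⟩ := M.evalFrom_split (s := M.start) hx rfl
  refine ⟨P, v, R, hv, fun k => ?_⟩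
  have hpow : M.evalFrom q (wordPow v k) = q :=
    M.evalFrom_of_pow hloop <| Language.mem_kstar.2
      ⟨List.replicate k v, rfl, fun _ hy => (List.eq_of_mem_replicate hy).symm ▸ rfl⟩
  rw [DFA.eval, DFA.evalFrom_of_append, DFA.evalFrom_of_append, hP, hpow, hR]

lemma _root_.DFA.append_mem_accepts_iff_of_eval_eq {α Q : Type} (M : DFA α Q) {u u' : List α}
    (h : M.eval u = M.eval u') (z : List α) : u ++ z ∈ M.accepts ↔ u' ++ z ∈ M.accepts := by
  simp only [DFA.mem_accepts, DFA.eval, DFA.evalFrom_of_append] at h ⊢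
  rw [h]

/-- for a DFA `M` over a finite alphabet with finite state type `Q`, the
accepted language is a multichain iff every branching point of `↓L(M)` has length strictly
less than `Fintype.card Q`. -/
theorem accepts_multichain_iff_branching_short
    (α Q : Type) [Fintype α] [Fintype Q] (M : DFA α Q) :
    IsMultichain {w : List α | w ∈ M.accepts} ↔
      ∀ x : List α, IsBranchingPoint (downcl {w : List α | w ∈ M.accepts}) x →
        x.length < Fintype.card Q := by
  set L := {w : List α | w ∈ M.accepts}
  constructor
  · intro hL x hx
    by_contra! hlen
    obtain ⟨-, a, b, hab, ha, hb⟩ := (isBranchingPoint_iff (isPrefixClosed_downcl _)).1 hx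
    obtain ⟨P, v, R, hv, hpump⟩ := M.exists_eval_pump hlen
    have hperiodic : ∀ c, x ++ [c] ∈ downcl L → ∃ K, R ++ [c] <+: wordPow v K := by
      rintro c ⟨_, hw, t, rfl⟩
      have hmem : ∀ k, P ++ wordPow v k ++ (R ++ [c] ++ t) ∈ L := fun k => by
        have := (M.append_mem_accepts_iff_of_eval_eq (hpump k) ([c] ++ t)).2
          (by rw [← List.append_assoc]; exact hw)
        change _ ∈ M.accepts
        simpa only [List.append_assoc] using this
      obtain ⟨K, hK⟩ := hL.exists_prefix_wordPow hv hmem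
      exact ⟨K, (List.prefix_append _ _).trans hK⟩
    have hcomp := isPrefixChain_prefixes_wordPow v _ (hperiodic a ha) _ (hperiodic b hb)
    simp only [List.prefix_append_right_inj, List.singleton_prefix_cons_iff] at hcomp
    exact hab (hcomp.elim id Eq.symm)
  · intro hbr
    have := (List.finite_length_le α (Fintype.card Q)).to_subtype
    refine isMultichain_of_fibers
      (fun u => (⟨u.take (Fintype.card Q), List.length_take_le _ _⟩ :
        {y : List α | y.length ≤ Fintype.card Q})) fun u hu v hv huv => ?_
    exact prefix_or_prefix_of_take_eq (isPrefixClosed_downcl _) hbr (mem_downcl_of_mem hu)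
      (mem_downcl_of_mem hv) (congrArg Subtype.val huv)

end Paper
end

section
/- Let α be a finite alphabet and L ⊆ List α. Then L is a multichain (with respect to the prefix order) if and only if the set of branching points of ↓L is finite. -/
namespace Paper

variable {α : Type}

lemma downcl_closed {L : Set (List α)} {u w : List α}
    (h : u ∈ downcl L) (hw : w <+: u) : w ∈ downcl L := by
  obtain ⟨v, hv, huv⟩ := h
  exact ⟨v, hv, hw.trans huv⟩

lemma isPrefixChain_downcl {S : Set (List α)} (h : IsPrefixChain S) :
    IsPrefixChain (downcl S) := by
  rintro u ⟨cu, hcu, hu⟩ v ⟨cv, hcv, hv⟩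
  rcases h cu hcu cv hcv with hc | hc
  · exact List.prefix_or_prefix_of_prefix (hu.trans hc) hv
  · exact List.prefix_or_prefix_of_prefix hu (hv.trans hc)

lemma downcl_iUnion {n : ℕ} {C : Fin n → Set (List α)} :
    downcl (⋃ i, C i) = ⋃ i, downcl (C i) := by
  ext u
  simp only [downcl, Set.mem_iUnion, Set.mem_setOf_eq]
  constructor
  · rintro ⟨v, hv, huv⟩
    obtain ⟨i, hi⟩ := hv
    exact ⟨i, v, hi, huv⟩
  · rintro ⟨i, v, hi, huv⟩
    exact ⟨v, ⟨i, hi⟩, huv⟩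

/-- If `x` has two distinct one-letter extensions in `M`, then `x` is a branching point. -/
lemma branch_of_two {M : Set (List α)} {x : List α} {a b : α} (hab : a ≠ b)
    (hx : x ∈ M) (ha : x ++ [a] ∈ M) (hb : x ++ [b] ∈ M) :
    IsBranchingPoint M x := by
  refine ⟨hx, ⟨x ++ [a], ha, ⟨[a], rfl⟩, by simp⟩, ?_⟩
  rintro ⟨z, ⟨hz, hxz, hne⟩, hleast⟩
  have hlen : x.length < z.length :=
    lt_of_le_of_ne hxz.length_le (fun h => hne (hxz.eq_of_length h))
  have h1 := hleast _ ⟨ha, ⟨[a], rfl⟩, by simp⟩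
  have h2 := hleast _ ⟨hb, ⟨[b], rfl⟩, by simp⟩
  have e1 : z = x ++ [a] := h1.eq_of_length (le_antisymm h1.length_le (by simpa using hlen))
  have e2 : z = x ++ [b] := h2.eq_of_length (le_antisymm h2.length_le (by simpa using hlen))
  exact hab (by simpa using e1.symm.trans e2)

/-- A branching point of a prefix-closed set has two distinct one-letter extensions. -/
lemma branching_children {L : Set (List α)} {x : List α}
    (h : IsBranchingPoint (downcl L) x) :
    ∃ a b, a ≠ b ∧ x ++ [a] ∈ downcl L ∧ x ++ [b] ∈ downcl L := by
  obtain ⟨hx, ⟨y, hy, hxy, hxyne⟩, hnl⟩ := h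
  obtain ⟨t, rfl⟩ := hxy
  cases t with
  | nil => simp at hxyne
  | cons a t' =>
    have ha : x ++ [a] ∈ downcl L :=
      downcl_closed hy ⟨t', by simp⟩
    by_contra hcon
    push_neg at hcon
    apply hnl
    refine ⟨x ++ [a], ⟨ha, ⟨[a], rfl⟩, by simp⟩, ?_⟩
    rintro y' ⟨hy', hxy', hne'⟩
    obtain ⟨s, rfl⟩ := hxy'
    cases s with
    | nil => simp at hne'
    | cons c s' =>
      have hc : x ++ [c] ∈ downcl L := downcl_closed hy' ⟨s', by simp⟩
      have hca : c = a := by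
        by_contra hca
        exact hcon a c (fun h => hca h.symm) ha hc
      subst hca
      exact ⟨s', by simp⟩

lemma finite_branching_of_multichain {L : Set (List α)} (h : IsMultichain L) :
    {x : List α | IsBranchingPoint (downcl L) x}.Finite := by
  obtain ⟨n, C, hchain, rfl⟩ := h
  have hmem : ∀ u : List α, u ∈ downcl (⋃ i, C i) ↔ ∃ i, u ∈ downcl (C i) := by
    intro u; rw [downcl_iUnion]; exact Set.mem_iUnion
  set B := {x : List α | IsBranchingPoint (downcl (⋃ i, C i)) x} with hB
  set I : List α → Set (Fin n) := fun x => {i | x ∈ downcl (C i)} with hI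
  -- key: strictly comparable branching points get different `I`
  have key : ∀ x ∈ B, ∀ (x' : List α), x' ∈ downcl (⋃ i, C i) → x <+: x' → x ≠ x' →
      ∃ i, i ∈ I x ∧ i ∉ I x' := by
    intro x hx x' _ hpre hne
    obtain ⟨a, b, hab, ha, hb⟩ := branching_children hx
    obtain ⟨t, rfl⟩ := hpre
    cases t with
    | nil => simp at hne
    | cons c s =>
      obtain ⟨d, hd, hdc⟩ : ∃ d, (x ++ [d] ∈ downcl (⋃ i, C i)) ∧ d ≠ c := by
        rcases eq_or_ne a c with rfl | h'
        · exact ⟨b, hb, fun hh => hab hh.symm⟩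
        · exact ⟨a, ha, h'⟩
      obtain ⟨i, hi⟩ := (hmem _).mp hd
      refine ⟨i, downcl_closed hi ⟨[d], rfl⟩, ?_⟩
      intro hx'i
      have hc : x ++ [c] ∈ downcl (C i) := downcl_closed hx'i ⟨s, by simp⟩
      rcases isPrefixChain_downcl (hchain i) _ hi _ hc with h' | h'
      · exact hdc (by simpa using h'.eq_of_length (by simp))
      · exact hdc (by simpa using (h'.eq_of_length (by simp)).symm)
  apply Set.Finite.of_finite_image (f := I) (Set.toFinite _)
  intro x hx x' hx' hIeq
  by_contra hne
  by_cases hcomp : x <+: x' ∨ x' <+: x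
  · rcases hcomp with hp | hp
    · obtain ⟨i, hi1, hi2⟩ := key x hx x' hx'.1 hp hne
      rw [hIeq] at hi1
      exact hi2 hi1
    · obtain ⟨i, hi1, hi2⟩ := key x' hx' x hx.1 hp (fun h => hne h.symm)
      rw [← hIeq] at hi1
      exact hi2 hi1
  · push_neg at hcomp
    obtain ⟨i, hi⟩ := (hmem x).mp hx.1
    have hi' : i ∈ I x' := by rw [← hIeq]; exact hi
    rcases isPrefixChain_downcl (hchain i) _ hi _ hi' with h' | h'
    · exact hcomp.1 h'
    · exact hcomp.2 h'

/-- Two words with no "branching disagreement" are comparable. -/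
lemma key_comparable : ∀ u v : List α,
    (∀ (x : List α) (a b : α), a ≠ b → x ++ [a] <+: u → x ++ [b] <+: v → False) →
    u <+: v ∨ v <+: u := by
  intro u
  induction u with
  | nil => intro v _; exact Or.inl (List.nil_prefix)
  | cons a u' ih =>
    intro v h
    cases v with
    | nil => exact Or.inr (List.nil_prefix)
    | cons b v' =>
      rcases eq_or_ne a b with rfl | hab
      · have := ih v' (fun x a' b' hne h1 h2 =>
          h (a :: x) a' b' hne
            (by simp only [List.cons_append]; exact List.cons_prefix_cons.mpr ⟨rfl, h1⟩)
            (by simp only [List.cons_append]; exact List.cons_prefix_cons.mpr ⟨rfl, h2⟩))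
        rcases this with h' | h'
        · exact Or.inl (List.cons_prefix_cons.mpr ⟨rfl, h'⟩)
        · exact Or.inr (List.cons_prefix_cons.mpr ⟨rfl, h'⟩)
      · exact absurd (h [] a b hab ⟨u', rfl⟩ ⟨v', rfl⟩) not_false

lemma multichain_of_finite_branching [Fintype α] {L : Set (List α)}
    (h : {x : List α | IsBranchingPoint (downcl L) x}.Finite) : IsMultichain L := by
  classical
  set B := h.toFinset with hBdef
  let ι := ({x // x ∈ B} × α → Bool)
  let φ : List α → ι := fun w p => decide ((p.1.1 ++ [p.2]) <+: w)
  refine ⟨Fintype.card ι, fun j => {w ∈ L | Fintype.equivFin ι (φ w) = j}, ?_, ?_⟩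
  · rintro j u ⟨hu, hju⟩ v ⟨hv, hjv⟩
    have hφ : φ u = φ v := (Fintype.equivFin ι).injective (hju.trans hjv.symm)
    apply key_comparable
    intro x a b hab h1 h2
    have hx : x ∈ downcl L := ⟨u, hu, (List.prefix_append x [a]).trans h1⟩
    have hxa : x ++ [a] ∈ downcl L := ⟨u, hu, h1⟩
    have hxb : x ++ [b] ∈ downcl L := ⟨v, hv, h2⟩
    have hxB : x ∈ B := h.mem_toFinset.mpr (branch_of_two hab hx hxa hxb)
    have hu' : φ u (⟨x, hxB⟩, a) = true := decide_eq_true h1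
    rw [hφ] at hu'
    have hav : x ++ [a] <+: v := of_decide_eq_true hu'
    rcases List.prefix_or_prefix_of_prefix hav h2 with h' | h'
    · exact hab (by simpa using h'.eq_of_length (by simp))
    · exact hab (by simpa using (h'.eq_of_length (by simp)).symm)
  · ext w
    constructor
    · intro hw
      exact Set.mem_iUnion.mpr ⟨Fintype.equivFin ι (φ w), hw, rfl⟩
    · intro hw
      obtain ⟨j, hj⟩ := Set.mem_iUnion.mp hw
      exact hj.1

/-- over a finite alphabet, a language `L` is a multichain iff the set of
branching points of `↓L` is finite. -/
theorem multichain_iff_finitely_many_branching_points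
    (α : Type) [Fintype α] (L : Set (List α)) :
    IsMultichain L ↔ {x : List α | IsBranchingPoint (downcl L) x}.Finite := by
  exact ⟨finite_branching_of_multichain, multichain_of_finite_branching⟩

end Paper
end

section
/- Finiteness of a multichain is uniformly first-order definable in the multichain companion: there is a first-order formula φ(X) with one free variable, over the language with a unary sort predicate, a binary membership relation ∈, and a binary relation ⪯, such that for every type A and every multichain S ⊆ List A, the multichain companion of (List A, ⪯) satisfies φ at inr S if and only if S is finite. -/
/-!
A multichain `S` is finite iff every element of `S` has a `⪯`-maximal element of `S` above it.
Indeed, each of the finitely many chains contains at most one maximal element of `S`, and every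
word has only finitely many prefixes; conversely, in a finite set a longest extension of `x` is
maximal. The right-hand side is first-order in the companion.
-/

open FirstOrder

namespace Paper

/-- The language with a single binary relation symbol `⪯`. -/
inductive PrefRel : ℕ → Type
  | pre : PrefRel 2

/-- The language with a single binary relation symbol `⪯`. -/
def prefLang : Language where
  Functions _ := Empty
  Relations := PrefRel

instance : prefLang.IsRelational := fun _ => inferInstanceAs (IsEmpty Empty)

/-- `(List A, ⪯)` as a structure for `prefLang`. -/
instance prefStructure (A : Type) : prefLang.Structure (List A) where
  funMap f := f.elim
  RelMap {n} r := match n, r with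
    | 2, PrefRel.pre => fun x => x 0 <+: x 1

section Multichain

variable {α : Type}

def IsPrefixMaximal (S : Set (List α)) (m : List α) : Prop :=
  m ∈ S ∧ ∀ y ∈ S, m <+: y → y <+: m

theorem IsPrefixMaximal.eq_of_prefix {S : Set (List α)} {m y : List α}
    (hm : IsPrefixMaximal S m) (hy : y ∈ S) (hmy : m <+: y) : m = y :=
  hmy.eq_of_length (le_antisymm hmy.length_le (hm.2 y hy hmy).length_le)

theorem IsPrefixChain.subsingleton_isPrefixMaximal {S C : Set (List α)} (hC : IsPrefixChain C) :
    {m | m ∈ C ∧ IsPrefixMaximal S m}.Subsingleton := by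
  rintro m₁ ⟨hm₁C, hm₁⟩ m₂ ⟨hm₂C, hm₂⟩
  rcases hC m₁ hm₁C m₂ hm₂C with h | h
  · exact hm₁.eq_of_prefix hm₂.1 h
  · exact (hm₂.eq_of_prefix hm₁.1 h).symm

theorem IsMultichain.finite_setOf_isPrefixMaximal {S : Set (List α)} (hS : IsMultichain S) :
    {m | IsPrefixMaximal S m}.Finite := by
  obtain ⟨n, C, hC, rfl⟩ := hS
  refine (Set.finite_iUnion fun i =>
    ((hC i).subsingleton_isPrefixMaximal (S := ⋃ i, C i)).finite).subset fun m hm => ?_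
  obtain ⟨i, hi⟩ := Set.mem_iUnion.mp hm.1
  exact Set.mem_iUnion.mpr ⟨i, hi, hm⟩

theorem finite_setOf_prefix (m : List α) : {u | u <+: m}.Finite := by
  simpa only [List.mem_inits] using List.finite_toSet m.inits

theorem finite_of_forall_exists_isPrefixMaximal {S : Set (List α)}
    (hmax : {m | IsPrefixMaximal S m}.Finite)
    (h : ∀ x ∈ S, ∃ m, x <+: m ∧ IsPrefixMaximal S m) : S.Finite := by
  refine (hmax.biUnion fun m _ => finite_setOf_prefix m).subset fun x hx => ?_
  obtain ⟨m, hxm, hm⟩ := h x hx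
  exact Set.mem_biUnion hm hxm

theorem _root_.Set.Finite.exists_isPrefixMaximal {S : Set (List α)} (hS : S.Finite) {x : List α}
    (hx : x ∈ S) : ∃ m, x <+: m ∧ IsPrefixMaximal S m := by
  obtain ⟨m, ⟨hmS, hxm⟩, hlong⟩ := (hS.subset (Set.sep_subset S (x <+: ·))).exists_maximalFor
    List.length _ ⟨x, hx, List.prefix_rfl⟩
  refine ⟨m, hxm, hmS, fun y hy hmy => ?_⟩
  rw [hmy.eq_of_length (le_antisymm hmy.length_le (hlong ⟨hy, hxm.trans hmy⟩ hmy.length_le))]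

theorem IsMultichain.finite_iff_forall_exists_isPrefixMaximal {S : Set (List α)}
    (hS : IsMultichain S) : S.Finite ↔ ∀ x ∈ S, ∃ m, x <+: m ∧ IsPrefixMaximal S m :=
  ⟨fun hfin _ hx => hfin.exists_isPrefixMaximal hx,
    finite_of_forall_exists_isPrefixMaximal hS.finite_setOf_isPrefixMaximal⟩

end Multichain

section Formula

open Language

variable {A : Type} {P : Set (List A) → Prop} {n : ℕ}

def memAtom (t₁ t₂ : (msoLang prefLang).Term (Fin 1 ⊕ Fin n)) :
    (msoLang prefLang).BoundedFormula (Fin 1) n :=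
  Relations.boundedFormula₂ (Sum.inr MSORel.mem : (msoLang prefLang).Relations 2) t₁ t₂

def prefixAtom (t₁ t₂ : (msoLang prefLang).Term (Fin 1 ⊕ Fin n)) :
    (msoLang prefLang).BoundedFormula (Fin 1) n :=
  Relations.boundedFormula₂ (Sum.inl PrefRel.pre : (msoLang prefLang).Relations 2) t₁ t₂

/-- `∀ x ∈ X, ∃ m ∈ X, x ⪯ m ∧ ∀ y ∈ X, m ⪯ y → y ⪯ m`, with `X` the free variable. -/
def finitenessFormula : (msoLang prefLang).Formula (Fin 1) :=
  ∀' (memAtom (&0) (var (Sum.inl 0)) ⟹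
    ∃' (memAtom (&1) (var (Sum.inl 0)) ⊓ prefixAtom (&0) (&1) ⊓
      ∀' (memAtom (&2) (var (Sum.inl 0)) ⟹ prefixAtom (&1) (&2) ⟹ prefixAtom (&2) (&1))))

theorem realize_memAtom (t₁ t₂ : (msoLang prefLang).Term (Fin 1 ⊕ Fin n))
    (v : Fin 1 → List A ⊕ {S // P S}) (xs : Fin n → List A ⊕ {S // P S}) :
    (memAtom t₁ t₂).Realize v xs ↔ ∃ a S, t₁.realize (Sum.elim v xs) = Sum.inl a ∧
      t₂.realize (Sum.elim v xs) = Sum.inr S ∧ a ∈ S.val :=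
  Iff.rfl

theorem realize_prefixAtom (t₁ t₂ : (msoLang prefLang).Term (Fin 1 ⊕ Fin n))
    (v : Fin 1 → List A ⊕ {S // P S}) (xs : Fin n → List A ⊕ {S // P S}) :
    (prefixAtom t₁ t₂).Realize v xs ↔ ∃ a b, t₁.realize (Sum.elim v xs) = Sum.inl a ∧
      t₂.realize (Sum.elim v xs) = Sum.inl b ∧ a <+: b := by
  change (∃ y, _ = Sum.inl ∘ y ∧ (y 0 <+: y 1)) ↔ _
  constructor
  · rintro ⟨y, hy, hpre⟩
    exact ⟨y 0, y 1, congrFun hy 0, congrFun hy 1, hpre⟩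
  · rintro ⟨a, b, ha, hb, hab⟩
    refine ⟨![a, b], funext fun i => ?_, hab⟩
    fin_cases i <;> simpa

theorem realize_finitenessFormula (S : {S : Set (List A) // P S}) :
    finitenessFormula.Realize (fun _ => (Sum.inr S : List A ⊕ {S // P S})) ↔
      ∀ x ∈ S.val, ∃ m, x <+: m ∧ IsPrefixMaximal S.val m := by
  simp [finitenessFormula, Formula.Realize, realize_memAtom, realize_prefixAtom, Fin.snoc,
    IsPrefixMaximal, and_assoc, and_left_comm]

end Formula

/-- finiteness of a multichain is uniformly first-order definable in the
multichain companion of `(List A, ⪯)`. -/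
theorem finiteness_of_multichain_definable :
    ∃ φ : (msoLang prefLang).Formula (Fin 1),
      ∀ (A : Type) (S : Set (List A)) (hS : IsMultichain S),
        (φ.Realize (fun _ =>
            (Sum.inr ⟨S, hS⟩ : List A ⊕ {S : Set (List A) // IsMultichain S})) ↔
          S.Finite) :=
  ⟨finitenessFormula, fun _ S hS =>
    (realize_finitenessFormula ⟨S, hS⟩).trans hS.finite_iff_forall_exists_isPrefixMaximal.symm⟩

end Paper
end
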